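/- If 2·P_hH − P_lL − P_lL·P_hH < 0, then for all real α with 1/2 < α ≤ 1/(2·P_lL), 1 − α − γ*(α) ≥ γ*(α). If 2·P_hH − P_lL − P_lL·P_hH ≥ 0, then for all real α with 1/2 < α ≤ min(1/(2·P_lL), B), 1 − α − γ*(α) ≥ γ*(α), where B = (P_lH² + 2·P_lL² − P_lH·P_hH·P_lL)/(P_lH² + 4·P_lL² − 4·P_lH·P_hH·P_lL) − P_lH·√(P_lH·P_lL·(2·P_hH − P_lL − P_lL·P_hH))/(P_lH² + 4·P_lL² − 4·P_lH·P_hH·P_lL). -/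

import Mathlib

/-!
Write `p = P_lL`, `q = P_lH`, `R = 2(1 - αq)(1 - 2αp)pq` for the radicand in `b*(α)` and
`γ*(α) = N / D`. With `t = b*(α) - (1 - 2α) = √R / (pq) ≥ 0` one has the identity
`(1 - α) D - 2 N = t (B - (2α - 1)√R)`, where `B = q(1 - α) + p(1 - 2α)(1 - 2qα)`, so the claim
follows from `(2α - 1)√R ≤ B`, i.e. from `B ≥ 0` and `G = B² - (2α - 1)² R ≥ 0`.

`G(c)` is a quadratic polynomial in `c`; completing the square gives
`L G(c) = (L c - M)² - q³ p Δ'` with `Δ' = 2P_hH - P_lL - P_lL P_hH` and `L, M` the denominator and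
first numerator of the bound in the statement, so `G ≥ 0` everywhere when `Δ' < 0`, and for
`c ≤ (M - q √(qpΔ'))/L` otherwise.
Finally `B ≥ 0` by continuity: `B(1/2) = q/2 > 0`, and a zero `c ∈ (1/2, α)` of `B` would give
`G(c) = -(2c - 1)² R(c) < 0`.
-/

/-- b*(α): the maximizer of ξ̂ in the non-linear regime. -/
noncomputable def bStar (PlH PlL α : ℝ) : ℝ :=
  (1 - 2 * α) +
    Real.sqrt (2 * (1 - α * PlH) * (1 - 2 * α * PlL) * PlL * PlH) / (PlL * PlH)

/-- γ*(α): the fraction of type-0 minority agents achieving ξ_h = ξ_l at b = b*(α). -/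
noncomputable def gammaStar (PhH PlH PhL PlL α : ℝ) : ℝ :=
  ((1 / 2) * (PlL * bStar PlH PlL α + 2 - PlL)
      - α * (PhH * PlL + PlH * PlL * bStar PlH PlL α + PlH)) /
    ((PlL * bStar PlH PlL α + PhL) * (PlH * bStar PlH PlL α + PhH + 1))

open Real Set

def bStarRadicand (p q α : ℝ) : ℝ := 2 * (1 - α * q) * (1 - 2 * α * p) * p * q

def marginCoeff (p q α : ℝ) : ℝ := q * (1 - α) + p * (1 - 2 * α) * (1 - 2 * q * α)

def marginDiscr (p q α : ℝ) : ℝ :=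
  marginCoeff p q α ^ 2 - (2 * α - 1) ^ 2 * bStarRadicand p q α

lemma div_le_sub_div_of_two_mul_le {N D c : ℝ} (hD : 0 ≤ D) (hc : 0 ≤ c)
    (h : 2 * N ≤ c * D) : N / D ≤ c - N / D := by
  rcases hD.eq_or_lt with rfl | hD
  · simpa using hc
  · rw [le_sub_iff_add_le, ← two_mul, mul_div_assoc', div_le_iff₀ hD]
    exact h

section
variable {p q α : ℝ}

lemma bStarRadicand_nonneg (hp : 0 < p) (hq : 0 < q) (hαp : 2 * α * p ≤ 1)
    (hαq : α * q ≤ 1) : 0 ≤ bStarRadicand p q α := by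
  have : 0 ≤ 1 - α * q := by linarith
  have : 0 ≤ 1 - 2 * α * p := by linarith
  unfold bStarRadicand
  positivity

lemma bStarRadicand_pos (hp : 0 < p) (hq : 0 < q) (hαp : 2 * α * p < 1)
    (hαq : α * q < 1) : 0 < bStarRadicand p q α := by
  have : 0 < 1 - α * q := by linarith
  have : 0 < 1 - 2 * α * p := by linarith
  unfold bStarRadicand
  positivity

lemma gammaStar_le_of_sqrt_mul_le (hp : 0 < p) (hq : 0 < q) (hα : α < 1)
    (hαp : 2 * α * p ≤ 1) (hαq : α * q ≤ 1)
    (hB : (2 * α - 1) * √(bStarRadicand p q α) ≤ marginCoeff p q α) :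
    gammaStar (1 - q) q (1 - p) p α ≤ 1 - α - gammaStar (1 - q) q (1 - p) p α := by
  set s := √(bStarRadicand p q α)
  have hs : s ^ 2 = bStarRadicand p q α := sq_sqrt (bStarRadicand_nonneg hp hq hαp hαq)
  set t := s / (p * q)
  have hb : bStar q p α = 1 - 2 * α + t := rfl
  have ht : 0 ≤ t := by positivity
  have hst : s = p * q * t := by
    simp only [t]
    field_simp
  have htt : p * q * t ^ 2 = 2 * (1 - α * q) * (1 - 2 * α * p) := by
    apply mul_left_cancel₀ (mul_ne_zero hp.ne' hq.ne')
    rw [hst, bStarRadicand] at hs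
    linear_combination hs
  unfold gammaStar
  rw [hb]
  apply div_le_sub_div_of_two_mul_le
  · have : 0 ≤ p * t + (1 - 2 * α * p) := by nlinarith
    have : 0 ≤ q * t + 2 * (1 - α * q) := by nlinarith
    nlinarith
  · linarith
  · have hgap : (1 - α) * ((p * (1 - 2 * α + t) + (1 - p)) * (q * (1 - 2 * α + t) + (1 - q) + 1))
        - 2 * (1 / 2 * (p * (1 - 2 * α + t) + 2 - p)
          - α * ((1 - q) * p + q * p * (1 - 2 * α + t) + q))
        = t * (marginCoeff p q α - (2 * α - 1) * s) := by
      rw [hst, marginCoeff]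
      linear_combination α * htt
    nlinarith [mul_nonneg ht (sub_nonneg.2 hB)]

lemma sqrt_mul_le_marginCoeff (hα : 1 / 2 ≤ α) (hB : 0 ≤ marginCoeff p q α)
    (hG : 0 ≤ marginDiscr p q α) :
    (2 * α - 1) * √(bStarRadicand p q α) ≤ marginCoeff p q α := by
  rw [← sqrt_sq (by linarith : 0 ≤ 2 * α - 1), ← sqrt_mul (sq_nonneg _), ← sqrt_sq hB]
  exact sqrt_le_sqrt (by unfold marginDiscr at hG; linarith)

lemma marginCoeff_nonneg (hp : 0 < p) (hq : 0 < q) (hα : 1 / 2 ≤ α) (hαp : 2 * α * p ≤ 1)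
    (hαq : α * q ≤ 1) (hG : ∀ c ∈ Icc (1 / 2) α, 0 ≤ marginDiscr p q c) :
    0 ≤ marginCoeff p q α := by
  by_contra! hneg
  have hcont : ContinuousOn (marginCoeff p q) (Icc (1 / 2) α) := by
    unfold marginCoeff
    fun_prop
  have hhalf : marginCoeff p q (1 / 2) = q / 2 := by
    unfold marginCoeff
    ring
  obtain ⟨c, ⟨hc₁, hc₂⟩, hc⟩ :=
    intermediate_value_Icc' hα hcont ⟨hneg.le, by rw [hhalf]; positivity⟩
  have hc₁' : 1 / 2 < c := hc₁.lt_of_ne (by rintro rfl; rw [hhalf] at hc; linarith)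
  have hc₂' : c < α := hc₂.lt_of_ne (by rintro rfl; linarith)
  have hR : 0 < bStarRadicand p q c :=
    bStarRadicand_pos hp hq (by nlinarith) (by nlinarith)
  have hGc := hG c ⟨hc₁, hc₂⟩
  rw [marginDiscr, hc] at hGc
  nlinarith [mul_pos (pow_pos (by linarith : 0 < 2 * c - 1) 2) hR]

lemma gammaStar_le_of_marginDiscr_nonneg (hp : 1 / 2 < p) (hq : 0 < q) (hqp : q ≤ p)
    (hα : 1 / 2 < α) (hαp : 2 * α * p ≤ 1) (hG : ∀ c ∈ Icc (1 / 2) α, 0 ≤ marginDiscr p q c) :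
    gammaStar (1 - q) q (1 - p) p α ≤ 1 - α - gammaStar (1 - q) q (1 - p) p α := by
  have hp₀ : 0 < p := by linarith
  have hα₁ : α < 1 := by nlinarith
  have hαq : α * q ≤ 1 := by nlinarith
  refine gammaStar_le_of_sqrt_mul_le hp₀ hq hα₁ hαp hαq (sqrt_mul_le_marginCoeff hα.le ?_ ?_)
  · exact marginCoeff_nonneg hp₀ hq hα.le hαp hαq hG
  · exact hG α ⟨hα.le, le_rfl⟩

lemma marginDiscr_mul_eq (p q c : ℝ) :
    marginDiscr p q c * (q ^ 2 + 4 * p ^ 2 - 4 * q * (1 - q) * p)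
      = ((q ^ 2 + 4 * p ^ 2 - 4 * q * (1 - q) * p) * c - (q ^ 2 + 2 * p ^ 2 - q * (1 - q) * p)) ^ 2
        - q ^ 3 * p * (2 * (1 - q) - p - p * (1 - q)) := by
  unfold marginDiscr marginCoeff bStarRadicand
  ring

lemma marginDiscr_nonneg_of_neg (hp : 0 < p) (hq : 0 < q)
    (hL : 0 < q ^ 2 + 4 * p ^ 2 - 4 * q * (1 - q) * p) (hΔ : 2 * (1 - q) - p - p * (1 - q) < 0)
    (c : ℝ) : 0 ≤ marginDiscr p q c := by
  refine nonneg_of_mul_nonneg_left ?_ hL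
  rw [marginDiscr_mul_eq]
  have : 0 < q ^ 3 * p := by positivity
  nlinarith [sq_nonneg ((q ^ 2 + 4 * p ^ 2 - 4 * q * (1 - q) * p) * c
    - (q ^ 2 + 2 * p ^ 2 - q * (1 - q) * p))]

lemma marginDiscr_nonneg_of_le {c : ℝ} (hp : 0 < p) (hq : 0 < q)
    (hL : 0 < q ^ 2 + 4 * p ^ 2 - 4 * q * (1 - q) * p) (hΔ : 0 ≤ 2 * (1 - q) - p - p * (1 - q))
    (hc : c ≤ (q ^ 2 + 2 * p ^ 2 - q * (1 - q) * p) / (q ^ 2 + 4 * p ^ 2 - 4 * q * (1 - q) * p)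
      - q * √(q * p * (2 * (1 - q) - p - p * (1 - q))) / (q ^ 2 + 4 * p ^ 2 - 4 * q * (1 - q) * p)) :
    0 ≤ marginDiscr p q c := by
  set r := √(q * p * (2 * (1 - q) - p - p * (1 - q)))
  have hr : r ^ 2 = q * p * (2 * (1 - q) - p - p * (1 - q)) := sq_sqrt (by positivity)
  rw [← sub_div, le_div_iff₀ hL] at hc
  have hqr : q * r ≤ (q ^ 2 + 2 * p ^ 2 - q * (1 - q) * p)
      - (q ^ 2 + 4 * p ^ 2 - 4 * q * (1 - q) * p) * c := by linarith
  have hsq := pow_le_pow_left₀ (by positivity) hqr 2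
  refine nonneg_of_mul_nonneg_left ?_ hL
  rw [marginDiscr_mul_eq]
  nlinarith

end

theorem stmt_18_general (PhH PlH PhL PlL : ℝ)
    (hhh : PhL < PhH) (hHL : PhH ≤ PlL) (hPlL : PlL < 1)
    (hsH : PhH + PlH = 1) (hsL : PhL + PlL = 1) :
    (2 * PhH - PlL - PlL * PhH < 0 →
      ∀ α : ℝ, 1 / 2 < α → α ≤ 1 / (2 * PlL) →
        gammaStar PhH PlH PhL PlL α ≤ 1 - α - gammaStar PhH PlH PhL PlL α) ∧
    (0 ≤ 2 * PhH - PlL - PlL * PhH →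
      ∀ α : ℝ, 1 / 2 < α →
        α ≤ min (1 / (2 * PlL))
          ((PlH ^ 2 + 2 * PlL ^ 2 - PlH * PhH * PlL)
              / (PlH ^ 2 + 4 * PlL ^ 2 - 4 * PlH * PhH * PlL)
            - PlH * Real.sqrt (PlH * PlL * (2 * PhH - PlL - PlL * PhH))
              / (PlH ^ 2 + 4 * PlL ^ 2 - 4 * PlH * PhH * PlL)) →
        gammaStar PhH PlH PhL PlL α ≤ 1 - α - gammaStar PhH PlH PhL PlL α) := by
  obtain rfl : PhH = 1 - PlH := by linarith
  obtain rfl : PhL = 1 - PlL := by linarith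
  have hp : 1 / 2 < PlL := by linarith
  have hq : 0 < PlH := by linarith
  have hqp : PlH ≤ PlL := by linarith
  have hL : 0 < PlH ^ 2 + 4 * PlL ^ 2 - 4 * PlH * (1 - PlH) * PlL := by
    nlinarith [sq_nonneg (2 * PlL - PlH), mul_pos (mul_pos hq hq) (by linarith : 0 < PlL)]
  have hαp {α : ℝ} (h : α ≤ 1 / (2 * PlL)) : 2 * α * PlL ≤ 1 := by
    rw [le_div_iff₀ (by linarith)] at h
    linarith
  refine ⟨fun hΔ α hα hα' => ?_, fun hΔ α hα hα' => ?_⟩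
  · exact gammaStar_le_of_marginDiscr_nonneg hp hq hqp hα (hαp hα') fun c _ =>
      marginDiscr_nonneg_of_neg (by linarith) hq hL hΔ c
  · rw [le_min_iff] at hα'
    exact gammaStar_le_of_marginDiscr_nonneg hp hq hqp hα (hαp hα'.1) fun c hc =>
      marginDiscr_nonneg_of_le (by linarith) hq hL hΔ (hc.2.trans hα'.2)

/-- the regions of α on which 1 - α - γ*(α) ≥ γ*(α) holds. -/
theorem stmt_18 (PhH PlH PhL PlL : ℝ)
    (hPhL : 0 < PhL) (hhh : PhL < PhH) (hHL : PhH ≤ PlL) (hPlL : PlL < 1)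
    (hsH : PhH + PlH = 1) (hsL : PhL + PlL = 1) :
    (2 * PhH - PlL - PlL * PhH < 0 →
      ∀ α : ℝ, 1 / 2 < α → α ≤ 1 / (2 * PlL) →
        gammaStar PhH PlH PhL PlL α ≤ 1 - α - gammaStar PhH PlH PhL PlL α) ∧
    (0 ≤ 2 * PhH - PlL - PlL * PhH →
      ∀ α : ℝ, 1 / 2 < α →
        α ≤ min (1 / (2 * PlL))
          ((PlH ^ 2 + 2 * PlL ^ 2 - PlH * PhH * PlL)
              / (PlH ^ 2 + 4 * PlL ^ 2 - 4 * PlH * PhH * PlL)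
            - PlH * Real.sqrt (PlH * PlL * (2 * PhH - PlL - PlL * PhH))
              / (PlH ^ 2 + 4 * PlL ^ 2 - 4 * PlH * PhH * PlL)) →
        gammaStar PhH PlH PhL PlL α ≤ 1 - α - gammaStar PhH PlH PhL PlL α) :=
  stmt_18_general PhH PlH PhL PlL hhh hHL hPlL hsH hsL
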